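/- arXiv:2106.00198 — 4 statements merged into one kernel-verified Lean document; each statement's English description precedes it below -/
import Mathlib

section
/- Let X be the probability simplex in R^n, let θ ∈ X and g ∈ R^n. Suppose there exists an index i* and Δ > 0 such that θ_{i*} ≥ θ_i for all i ≠ i*, and g_{i*} ≥ g_i + Δ for all i ≠ i*. Let θ' be the Euclidean projection of θ + g onto X. Then θ'_{i*} ≥ min{1, θ_{i*} + Δ/2}. -/
open Finset

/-- Simplex projection lemma: if `θ` lies in the probability simplex, its largest
coordinate is at `istar`, and `g istar` exceeds every other coordinate of `g` by at
least `Δ > 0`, then the Euclidean projection `θ'` of `θ + g` onto the simplex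
satisfies `θ' istar ≥ min {1, θ istar + Δ/2}`. -/
theorem stmt0 {n : ℕ} (θ g θ' : Fin n → ℝ) (istar : Fin n) (Δ : ℝ) (hΔ : 0 < Δ)
    (hθ : (∀ i, 0 ≤ θ i) ∧ ∑ i, θ i = 1)
    (hmax : ∀ i, i ≠ istar → θ i ≤ θ istar)
    (hgap : ∀ i, i ≠ istar → g i + Δ ≤ g istar)
    (hfeas : (∀ i, 0 ≤ θ' i) ∧ ∑ i, θ' i = 1)
    (hproj : ∀ w : Fin n → ℝ, ((∀ i, 0 ≤ w i) ∧ ∑ i, w i = 1) →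
      ∑ i, (θ i + g i - θ' i) ^ 2 ≤ ∑ i, (θ i + g i - w i) ^ 2) :
    min 1 (θ istar + Δ / 2) ≤ θ' istar := by
  by_contra hcon
  push_neg at hcon
  rw [lt_min_iff] at hcon
  obtain ⟨hlt1, hlt2⟩ := hcon
  obtain ⟨hθ'0, hθ'1⟩ := hfeas
  obtain ⟨hθ0, hθ1⟩ := hθ
  -- exchange inequality
  have exch : ∀ j, j ≠ istar → 0 < θ' j →
      θ istar + g istar - θ' istar ≤ θ j + g j - θ' j := by
    intro j hj hjpos
    by_contra hc
    push_neg at hc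
    set a : ℝ := (θ istar + g istar - θ' istar) - (θ j + g j - θ' j) with ha
    have hapos : 0 < a := by simp only [ha]; linarith
    set ε : ℝ := min (θ' j) (a / 2) with hε
    have hεj : ε ≤ θ' j := min_le_left _ _
    have hεa : ε ≤ a / 2 := min_le_right _ _
    have hεpos : 0 < ε := lt_min hjpos (by linarith)
    set w : Fin n → ℝ := fun i =>
      θ' i + (if i = istar then ε else 0) - (if i = j then ε else 0) with hw
    have hwfeas : (∀ i, 0 ≤ w i) ∧ ∑ i, w i = 1 := by
      constructor
      · intro i
        simp only [hw]
        have h0 := hθ'0 i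
        split_ifs with h1 h2 h3 <;> try linarith
        subst h3; linarith
      · simp only [hw, Finset.sum_sub_distrib, Finset.sum_add_distrib,
          Finset.sum_ite_eq' Finset.univ, Finset.mem_univ, if_true, hθ'1]
        ring
    have hkey : ∀ i, (θ i + g i - w i) ^ 2 = (θ i + g i - θ' i) ^ 2
        + (if i = istar then ε ^ 2 - 2 * ε * (θ istar + g istar - θ' istar) else 0)
        + (if i = j then ε ^ 2 + 2 * ε * (θ j + g j - θ' j) else 0) := by
      intro i
      simp only [hw]
      split_ifs with h1 h2 h3
      · exact absurd (h1.symm.trans h2).symm hj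
      · subst h1; ring
      · subst h3; ring
      · ring
    have hsum : ∑ i, (θ i + g i - w i) ^ 2 = ∑ i, (θ i + g i - θ' i) ^ 2
        + (ε ^ 2 - 2 * ε * (θ istar + g istar - θ' istar))
        + (ε ^ 2 + 2 * ε * (θ j + g j - θ' j)) := by
      simp only [hkey, Finset.sum_add_distrib,
        Finset.sum_ite_eq' Finset.univ, Finset.mem_univ, if_true]
    have hle := hproj w hwfeas
    rw [hsum] at hle
    have : a ≤ ε := by
      nlinarith [hεpos]
    linarith
  -- there is j ≠ istar with θ' j > 0
  have hsum_erase : ∑ i ∈ Finset.univ.erase istar, θ' i = 1 - θ' istar := by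
    have := Finset.sum_erase_add Finset.univ θ' (Finset.mem_univ istar)
    linarith
  have hex : ∃ j ∈ Finset.univ.erase istar, 0 < θ' j := by
    by_contra hne
    push_neg at hne
    have : ∑ i ∈ Finset.univ.erase istar, θ' i ≤ 0 :=
      Finset.sum_nonpos hne
    linarith
  obtain ⟨j0, hj0mem, hj0pos⟩ := hex
  -- the positive support away from istar
  set J : Finset (Fin n) := (Finset.univ.erase istar).filter (fun j => 0 < θ' j) with hJ
  have hJne : J.Nonempty := ⟨j0, Finset.mem_filter.mpr ⟨hj0mem, hj0pos⟩⟩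
  have hJbound : ∀ j ∈ J, θ' j < θ j - Δ / 2 := by
    intro j hjm
    rw [hJ, Finset.mem_filter, Finset.mem_erase] at hjm
    obtain ⟨⟨hjne, -⟩, hjpos⟩ := hjm
    have h1 := exch j hjne hjpos
    have h2 := hgap j hjne
    linarith
  have hsumJ : ∑ j ∈ J, θ' j = 1 - θ' istar := by
    rw [← hsum_erase]
    apply Finset.sum_filter_of_ne
    intro j hjm hne
    exact lt_of_le_of_ne (hθ'0 j) (Ne.symm hne)
  have h3 : ∑ j ∈ J, θ' j < ∑ j ∈ J, (θ j - Δ / 2) :=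
    Finset.sum_lt_sum_of_nonempty hJne hJbound
  have h4 : ∑ j ∈ J, (θ j - Δ / 2) = ∑ j ∈ J, θ j - (J.card : ℝ) * (Δ / 2) := by
    rw [Finset.sum_sub_distrib, Finset.sum_const, nsmul_eq_mul]
  have h5 : ∑ j ∈ J, θ j ≤ ∑ j ∈ Finset.univ.erase istar, θ j :=
    Finset.sum_le_sum_of_subset_of_nonneg (Finset.filter_subset _ _) (fun i _ _ => hθ0 i)
  have h6 : ∑ j ∈ Finset.univ.erase istar, θ j = 1 - θ istar := by
    have := Finset.sum_erase_add Finset.univ θ (Finset.mem_univ istar)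
    linarith
  have h7 : (1 : ℝ) ≤ (J.card : ℝ) := by
    exact_mod_cast Finset.one_le_card.mpr hJne
  nlinarith [hΔ]
end

section
/- Let X ⊆ R^n be a nonempty closed convex set and f : R^n → R be differentiable with β-Lipschitz gradient. Fix η > 0, a point θ ∈ X, define the gradient mapping G(θ) = (1/η)(Proj_X(θ + η∇f(θ)) − θ) and θ⁺ = θ + ηG(θ). Then for every θ' ∈ X, ⟨∇f(θ⁺), θ' − θ⁺⟩ ≤ (1 + ηβ)‖G(θ)‖·‖θ' − θ⁺‖. -/
/-!
Write `G = (1/η)(θ⁺ − θ)`, so that `θ + η∇f(θ) − θ⁺ = η(∇f(θ) − G)`. The variational inequality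
of the projection then says `⟨∇f(θ), θ' − θ⁺⟩ ≤ ⟨G, θ' − θ⁺⟩ ≤ ‖G‖‖θ' − θ⁺‖`, and replacing
`∇f(θ)` by `∇f(θ⁺)` costs at most `β‖θ⁺ − θ‖‖θ' − θ⁺‖ = ηβ‖G‖‖θ' − θ⁺‖` by Cauchy–Schwarz.
-/

open scoped RealInnerProductSpace

variable {E : Type*} [NormedAddCommGroup E] [InnerProductSpace ℝ E]

theorem Convex.inner_sub_nonpos_of_forall_dist_le {K : Set E} (hK : Convex ℝ K) {u p : E}
    (hp : p ∈ K) (hmin : ∀ w ∈ K, dist u p ≤ dist u w) : ∀ w ∈ K, ⟪u - p, w - p⟫ ≤ 0 := by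
  have : Nonempty K := ⟨⟨p, hp⟩⟩
  rw [← norm_eq_iInf_iff_real_inner_le_zero hK hp]
  refine le_antisymm (le_ciInf fun w => ?_) (ciInf_le ⟨0, ?_⟩ (⟨p, hp⟩ : K))
  · simpa only [dist_eq_norm] using hmin w w.2
  · rintro _ ⟨w, rfl⟩
    exact norm_nonneg _

theorem inner_le_norm_gradientMapping_mul_norm {η : ℝ} (hη : 0 < η) {θ v p w : E}
    (hvar : ⟪θ + η • v - p, w - p⟫ ≤ 0) :
    ⟪v, w - p⟫ ≤ ‖(1 / η) • (p - θ)‖ * ‖w - p‖ := by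
  set G := (1 / η) • (p - θ)
  have hstep : θ + η • v - p = η • (v - G) := by
    rw [smul_sub, smul_smul, mul_one_div_cancel hη.ne', one_smul]
    abel
  rw [hstep, real_inner_smul_left, inner_sub_left] at hvar
  calc ⟪v, w - p⟫ ≤ ⟪G, w - p⟫ := by nlinarith
    _ ≤ ‖G‖ * ‖w - p‖ := real_inner_le_norm _ _

theorem stmt1_general {n : ℕ} (X : Set (EuclideanSpace ℝ (Fin n)))
    (hXconv : Convex ℝ X)
    (f : EuclideanSpace ℝ (Fin n) → ℝ)
    (β : ℝ)
    (hLip : ∀ x y, ‖gradient f x - gradient f y‖ ≤ β * ‖x - y‖)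
    (η : ℝ) (hη : 0 < η)
    (θ : EuclideanSpace ℝ (Fin n))
    (θplus : EuclideanSpace ℝ (Fin n)) (hmem : θplus ∈ X)
    (hproj : ∀ w ∈ X, dist (θ + η • gradient f θ) θplus ≤ dist (θ + η • gradient f θ) w) :
    ∀ θ' ∈ X, ⟪gradient f θplus, θ' - θplus⟫ ≤
      (1 + η * β) * ‖(1 / η) • (θplus - θ)‖ * ‖θ' - θplus‖ := by
  intro θ' hθ'
  set G := (1 / η) • (θplus - θ)
  have hG : ⟪gradient f θ, θ' - θplus⟫ ≤ ‖G‖ * ‖θ' - θplus‖ :=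
    inner_le_norm_gradientMapping_mul_norm hη
      (hXconv.inner_sub_nonpos_of_forall_dist_le hmem hproj θ' hθ')
  have hstep : ‖θplus - θ‖ = η * ‖G‖ := by
    rw [norm_smul, Real.norm_of_nonneg (by positivity), ← mul_assoc, mul_one_div_cancel hη.ne',
      one_mul]
  have hLipStep : ⟪gradient f θplus - gradient f θ, θ' - θplus⟫ ≤ η * β * ‖G‖ * ‖θ' - θplus‖ :=
    calc _ ≤ ‖gradient f θplus - gradient f θ‖ * ‖θ' - θplus‖ := real_inner_le_norm _ _
      _ ≤ β * ‖θplus - θ‖ * ‖θ' - θplus‖ := by gcongr; exact hLip θplus θ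
      _ = η * β * ‖G‖ * ‖θ' - θplus‖ := by rw [hstep]; ring
  rw [inner_sub_left] at hLipStep
  linarith

/-- Gradient mapping lemma: for the projected-gradient step `θ⁺ = Proj_X(θ + η ∇f(θ))`
with gradient mapping `G(θ) = (1/η)(θ⁺ − θ)`, one has
`⟨∇f(θ⁺), θ' − θ⁺⟩ ≤ (1 + ηβ)‖G(θ)‖‖θ' − θ⁺‖` for all `θ' ∈ X`. -/
theorem stmt1 {n : ℕ} (X : Set (EuclideanSpace ℝ (Fin n))) (hXne : X.Nonempty)
    (hXcl : IsClosed X) (hXconv : Convex ℝ X)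
    (f : EuclideanSpace ℝ (Fin n) → ℝ) (hf : Differentiable ℝ f)
    (β : ℝ) (hβ : 0 ≤ β)
    (hLip : ∀ x y, ‖gradient f x - gradient f y‖ ≤ β * ‖x - y‖)
    (η : ℝ) (hη : 0 < η)
    (θ : EuclideanSpace ℝ (Fin n)) (hθ : θ ∈ X)
    (θplus : EuclideanSpace ℝ (Fin n)) (hmem : θplus ∈ X)
    (hproj : ∀ w ∈ X, dist (θ + η • gradient f θ) θplus ≤ dist (θ + η • gradient f θ) w) :
    ∀ θ' ∈ X, ⟪gradient f θplus, θ' - θplus⟫ ≤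
      (1 + η * β) * ‖(1 / η) • (θplus - θ)‖ * ‖θ' - θplus‖ :=
  stmt1_general X hXconv f β hLip η hη θ θplus hmem hproj
end

section
/- (Equivalence of first-order stationary policies and Nash equilibria) In an n-agent tabular discounted MDP with direct distributed policy parameterization, assume that d_θ(s) > 0 for every state s and every feasible θ. Then a policy θ* is a Nash equilibrium (J_i(θ*_i, θ*_{-i}) ≥ J_i(θ'_i, θ*_{-i}) for all feasible θ'_i and all i) if and only if it is first-order stationary (⟨θ'_i − θ*_i, ∇_{θ_i} J_i(θ*)⟩ ≤ 0 for all feasible θ'_i and all i). -/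
open Finset

namespace MAMDP

variable {n : ℕ} {S : Type} [Fintype S] [DecidableEq S]
  {A : Fin n → Type} [∀ i, Fintype (A i)] [∀ i, DecidableEq (A i)]

/-- Joint product policy probability. -/
def jointPi (θ : ∀ i, S → A i → ℝ) (s : S) (a : ∀ i, A i) : ℝ :=
  ∏ i, θ i s (a i)

/-- One-step evolution of a state distribution under the joint policy. -/
def stepDist (P : S → (∀ i, A i) → S → ℝ) (θ : ∀ i, S → A i → ℝ) (μ : S → ℝ) : S → ℝ :=
  fun s' => ∑ s, ∑ a, μ s * jointPi θ s a * P s a s'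

/-- State distribution after `t` steps, starting from `μ`. -/
def visit (P : S → (∀ i, A i) → S → ℝ) (θ : ∀ i, S → A i → ℝ) (t : ℕ) (μ : S → ℝ) : S → ℝ :=
  (stepDist P θ)^[t] μ

/-- Point mass at `s0`. -/
def deltaDist (s0 : S) : S → ℝ := fun s => if s = s0 then 1 else 0

/-- Discounted state visitation distribution `d_θ` for initial distribution `ρ`. -/
noncomputable def dvisit (P : S → (∀ i, A i) → S → ℝ) (θ : ∀ i, S → A i → ℝ) (γ : ℝ)
    (ρ : S → ℝ) (s : S) : ℝ :=
  (1 - γ) * ∑' t : ℕ, γ ^ t * visit P θ t ρ s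

/-- Expected one-step reward at state `s` under the joint policy. -/
def expRew (rw : S → (∀ i, A i) → ℝ) (θ : ∀ i, S → A i → ℝ) (s : S) : ℝ :=
  ∑ a, jointPi θ s a * rw s a

/-- Value function: expected discounted sum of rewards starting from state `s`. -/
noncomputable def Vval (P : S → (∀ i, A i) → S → ℝ) (θ : ∀ i, S → A i → ℝ) (γ : ℝ)
    (rw : S → (∀ i, A i) → ℝ) (s : S) : ℝ :=
  ∑' t : ℕ, γ ^ t * ∑ s', visit P θ t (deltaDist s) s' * expRew rw θ s'

/-- Q-function. -/
noncomputable def Qval (P : S → (∀ i, A i) → S → ℝ) (θ : ∀ i, S → A i → ℝ) (γ : ℝ)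
    (rw : S → (∀ i, A i) → ℝ) (s : S) (a : ∀ i, A i) : ℝ :=
  rw s a + γ * ∑ s', P s a s' * Vval P θ γ rw s'

/-- Total discounted reward `J` under initial distribution `ρ`. -/
noncomputable def Jval (P : S → (∀ i, A i) → S → ℝ) (θ : ∀ i, S → A i → ℝ) (γ : ℝ)
    (rw : S → (∀ i, A i) → ℝ) (ρ : S → ℝ) : ℝ :=
  ∑ s, ρ s * Vval P θ γ rw s

/-- Averaged Q-function of agent `i`: average of `Q(s, a)` with `a i = ai` fixed,
weighted by the other agents' policies. -/
noncomputable def Qbar (P : S → (∀ i, A i) → S → ℝ) (θ : ∀ i, S → A i → ℝ) (γ : ℝ)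
    (rw : S → (∀ i, A i) → ℝ) (i : Fin n) (s : S) (ai : A i) : ℝ :=
  ∑ a : ∀ j, A j, if a i = ai then
    (∏ j ∈ Finset.univ.erase i, θ j s (a j)) * Qval P θ γ rw s a else 0

/-- Averaged advantage function of agent `i`. -/
noncomputable def Abar (P : S → (∀ i, A i) → S → ℝ) (θ : ∀ i, S → A i → ℝ) (γ : ℝ)
    (rw : S → (∀ i, A i) → ℝ) (i : Fin n) (s : S) (ai : A i) : ℝ :=
  Qbar P θ γ rw i s ai - Vval P θ γ rw s

/-- Entries of the policy gradient `∇_{θ_i} J_i(θ)`: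
`(1/(1-γ)) d_θ(s) Q̄_i^θ(s, a_i)`. -/
noncomputable def gradJ (P : S → (∀ i, A i) → S → ℝ) (θ : ∀ i, S → A i → ℝ) (γ : ℝ)
    (rw : S → (∀ i, A i) → ℝ) (ρ : S → ℝ) (i : Fin n) (s : S) (ai : A i) : ℝ :=
  (1 / (1 - γ)) * dvisit P θ γ ρ s * Qbar P θ γ rw i s ai

/-- Feasibility of agent `i`'s parameters: a point of `Δ(A_i)^{|S|}`. -/
def feasibleAgent (i : Fin n) (θi : S → A i → ℝ) : Prop :=
  ∀ s, (∀ a, 0 ≤ θi s a) ∧ ∑ a, θi s a = 1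

/-- Feasibility of a joint parameter `θ ∈ X = ∏_i Δ(A_i)^{|S|}`. -/
def feasible (θ : ∀ i, S → A i → ℝ) : Prop := ∀ i, feasibleAgent i (θ i)

/-- `P` is a transition kernel. -/
def stochMat (P : S → (∀ i, A i) → S → ℝ) : Prop :=
  ∀ s a, (∀ s', 0 ≤ P s a s') ∧ ∑ s', P s a s' = 1

/-- `ρ` is a probability distribution on states. -/
def initDist (ρ : S → ℝ) : Prop := (∀ s, 0 ≤ ρ s) ∧ ∑ s, ρ s = 1

/-- Nash equilibrium. -/
def isNE (P : S → (∀ i, A i) → S → ℝ) (γ : ℝ) (r : Fin n → S → (∀ i, A i) → ℝ)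
    (ρ : S → ℝ) (θ : ∀ i, S → A i → ℝ) : Prop :=
  feasible θ ∧ ∀ (i : Fin n) (θi' : S → A i → ℝ), feasibleAgent i θi' →
    Jval P (Function.update θ i θi') γ (r i) ρ ≤ Jval P θ γ (r i) ρ

/-- Strict Nash equilibrium. -/
def strictNE (P : S → (∀ i, A i) → S → ℝ) (γ : ℝ) (r : Fin n → S → (∀ i, A i) → ℝ)
    (ρ : S → ℝ) (θ : ∀ i, S → A i → ℝ) : Prop :=
  feasible θ ∧ ∀ (i : Fin n) (θi' : S → A i → ℝ), feasibleAgent i θi' → θi' ≠ θ i →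
    Jval P (Function.update θ i θi') γ (r i) ρ < Jval P θ γ (r i) ρ

/-- Markov potential game with potential `φ`. -/
def isPotential (P : S → (∀ i, A i) → S → ℝ) (γ : ℝ) (r : Fin n → S → (∀ i, A i) → ℝ)
    (φ : S → (∀ i, A i) → ℝ) : Prop :=
  ∀ (θ : ∀ i, S → A i → ℝ), feasible θ → ∀ (i : Fin n) (θi' : S → A i → ℝ),
    feasibleAgent i θi' → ∀ s,
    Vval P (Function.update θ i θi') γ (r i) s - Vval P θ γ (r i) s
      = Vval P (Function.update θ i θi') γ φ s - Vval P θ γ φ s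

/-- Squared Euclidean distance between two joint parameters. -/
def polNormSq (x y : ∀ i, S → A i → ℝ) : ℝ :=
  ∑ i, ∑ s, ∑ a, (x i s a - y i s a) ^ 2

/-- The deterministic (pure) joint policy picking `astar i s`. -/
def purePol (astar : ∀ i : Fin n, S → A i) : ∀ i, S → A i → ℝ :=
  fun i s a => if a = astar i s then 1 else 0

end MAMDP

open MAMDP

/-!
Write `Ā_i(s, a)` for the averaged advantage of agent `i` at `θ*`. Both conditions are equivalent
to `Ā_i ≤ 0` everywhere. By the performance difference lemma, a unilateral deviation `θ'_i`
changes `J_i` by `(1 - γ)⁻¹ ∑ₛ d_{θ'}(s) ∑ₐ θ'_i(s, a) Ā_i(s, a)`, while the first-order term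
`⟨θ'_i - θ*_i, ∇_{θ_i} J_i(θ*)⟩` is the same expression with `d_{θ*}` in place of `d_{θ'}`.
Since `∑ₐ θ*_i(s, a) Ā_i(s, a) = 0`, deviating to a pure action `a` at a single state `s`
reduces either expression to a positive multiple of `Ā_i(s, a)`; conversely `Ā_i ≤ 0` makes
both expressions nonpositive for every deviation.
-/

section Simplex

variable {α β : Type*} [Fintype α] [Fintype β]

theorem sum_mul_sum_mul_nonpos {w : α → ℝ} {η f : α → β → ℝ} (hw : ∀ s, 0 ≤ w s)
    (hη : ∀ s, η s ∈ stdSimplex ℝ β) (hf : ∀ s a, f s a ≤ 0) :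
    ∑ s, w s * ∑ a, η s a * f s a ≤ 0 :=
  sum_nonpos fun s _ => mul_nonpos_of_nonneg_of_nonpos (hw s) <|
    sum_nonpos fun a _ => mul_nonpos_of_nonneg_of_nonpos ((hη s).1 a) (hf s a)

variable [DecidableEq α] [DecidableEq β]

theorem sum_mul_sum_update_single (w : α → ℝ) {θ f : α → β → ℝ}
    (hf : ∀ s, ∑ a, θ s a * f s a = 0) (s₀ : α) (a₀ : β) :
    ∑ s, w s * ∑ a, Function.update θ s₀ (Pi.single a₀ 1) s a * f s a = w s₀ * f s₀ a₀ := by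
  rw [sum_eq_single s₀ (fun s _ hs => by rw [Function.update_of_ne hs, hf, mul_zero])
    (fun h => absurd (mem_univ s₀) h)]
  simp [Pi.single_apply]

theorem forall_sum_mul_sum_mul_nonpos_iff {θ f : α → β → ℝ} (hθ : ∀ s, θ s ∈ stdSimplex ℝ β)
    (hf : ∀ s, ∑ a, θ s a * f s a = 0) (W : (α → β → ℝ) → α → ℝ)
    (hW : ∀ η, (∀ s, η s ∈ stdSimplex ℝ β) → ∀ s, 0 < W η s) :
    (∀ η : α → β → ℝ, (∀ s, η s ∈ stdSimplex ℝ β) → ∑ s, W η s * ∑ a, η s a * f s a ≤ 0) ↔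
      ∀ s a, f s a ≤ 0 := by
  refine ⟨fun h s₀ a₀ => ?_, fun h η hη => sum_mul_sum_mul_nonpos (fun s => (hW η hη s).le) hη h⟩
  have hη : ∀ s, Function.update θ s₀ (Pi.single a₀ 1) s ∈ stdSimplex ℝ β := by
    intro s
    rcases eq_or_ne s s₀ with rfl | hs
    · simpa only [Function.update_self] using single_mem_stdSimplex ℝ a₀
    · simpa only [Function.update_of_ne hs] using hθ s
  have hle := h _ hη
  rw [sum_mul_sum_update_single _ hf] at hle
  exact nonpos_of_mul_nonpos_right hle (hW _ hη s₀)

end Simplex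

namespace MAMDP

variable {n : ℕ} {S : Type} {A : Fin n → Type}
  {P : S → (∀ i, A i) → S → ℝ} {θ : ∀ i, S → A i → ℝ} {γ : ℝ}

theorem jointPi_update (θ : ∀ i, S → A i → ℝ) (i : Fin n) (θi : S → A i → ℝ) (s : S)
    (a : ∀ i, A i) :
    jointPi (Function.update θ i θi) s a = θi s (a i) * ∏ j ∈ univ.erase i, θ j s (a j) := by
  rw [jointPi, ← mul_prod_erase univ _ (mem_univ i), Function.update_self]
  exact congrArg _ <| prod_congr rfl fun j hj => by
    rw [Function.update_of_ne (ne_of_mem_erase hj)]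

variable [∀ i, Fintype (A i)]

theorem feasible.update (hθ : feasible θ) {i : Fin n} {θi : S → A i → ℝ}
    (hθi : feasibleAgent i θi) : feasible (Function.update θ i θi) := by
  intro j
  rcases eq_or_ne j i with rfl | hj
  · rwa [Function.update_self]
  · rw [Function.update_of_ne hj]
    exact hθ j

theorem jointPi_nonneg (hθ : feasible θ) (s : S) (a : ∀ i, A i) : 0 ≤ jointPi θ s a :=
  prod_nonneg fun i _ => (hθ i s).1 (a i)

theorem sum_jointPi (hθ : feasible θ) (s : S) : ∑ a, jointPi θ s a = 1 := by
  simp only [jointPi, ← Fintype.prod_sum, fun i => (hθ i s).2, prod_const_one]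

variable [Fintype S]

theorem initDist.le_one {μ : S → ℝ} (hμ : initDist μ) (s : S) : μ s ≤ 1 :=
  hμ.2 ▸ single_le_sum (fun s _ => hμ.1 s) (mem_univ s)

theorem initDist_stepDist (hP : stochMat P) (hθ : feasible θ) {μ : S → ℝ} (hμ : initDist μ) :
    initDist (stepDist P θ μ) := by
  refine ⟨fun s' => sum_nonneg fun s _ => sum_nonneg fun a _ =>
    mul_nonneg (mul_nonneg (hμ.1 s) (jointPi_nonneg hθ s a)) ((hP s a).1 s'), ?_⟩
  simp only [stepDist]
  rw [sum_comm, ← hμ.2]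
  refine sum_congr rfl fun s _ => ?_
  simp_rw [sum_comm (γ := S), ← mul_sum, (hP s _).2, mul_one, ← mul_sum, sum_jointPi hθ, mul_one]

theorem visit_succ (t : ℕ) (μ : S → ℝ) :
    visit P θ (t + 1) μ = visit P θ t (stepDist P θ μ) :=
  Function.iterate_succ_apply _ _ _

theorem initDist_visit (hP : stochMat P) (hθ : feasible θ) {μ : S → ℝ} (hμ : initDist μ)
    (t : ℕ) : initDist (visit P θ t μ) := by
  induction t generalizing μ with
  | zero => exact hμ
  | succ t ih => rw [visit_succ]; exact ih (initDist_stepDist hP hθ hμ)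

variable (P θ γ) in
/-- `Vval P θ γ rw s` is `discountedReturn P θ γ (expRew rw θ) (deltaDist s)` by definition. -/
noncomputable def discountedReturn (c : S → ℝ) (μ : S → ℝ) : ℝ :=
  ∑' t : ℕ, γ ^ t * ∑ s, visit P θ t μ s * c s

section Discounted

variable (hP : stochMat P) (hθ : feasible θ) (hγ0 : 0 ≤ γ) (hγ1 : γ < 1)
include hP hθ hγ0 hγ1

theorem summable_pow_mul_visit {μ : S → ℝ} (hμ : initDist μ) (s : S) :
    Summable fun t : ℕ => γ ^ t * visit P θ t μ s := by
  refine (summable_geometric_of_lt_one hγ0 hγ1).of_nonneg_of_le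
    (fun t => mul_nonneg (pow_nonneg hγ0 t) ((initDist_visit hP hθ hμ t).1 s)) fun t => ?_
  exact mul_le_of_le_one_right (pow_nonneg hγ0 t) ((initDist_visit hP hθ hμ t).le_one s)

theorem summable_discountedReturn {μ : S → ℝ} (hμ : initDist μ) (c : S → ℝ) :
    Summable fun t : ℕ => γ ^ t * ∑ s, visit P θ t μ s * c s := by
  simp only [mul_sum, ← mul_assoc]
  exact summable_sum fun s _ => (summable_pow_mul_visit hP hθ hγ0 hγ1 hμ s).mul_right (c s)

theorem sum_dvisit_mul {ρ : S → ℝ} (hρ : initDist ρ) (c : S → ℝ) :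
    ∑ s, dvisit P θ γ ρ s * c s = (1 - γ) * discountedReturn P θ γ c ρ := by
  simp only [dvisit, mul_assoc, ← mul_sum, ← tsum_mul_right]
  rw [← Summable.tsum_finsetSum fun s _ =>
    by simpa only [mul_assoc] using (summable_pow_mul_visit hP hθ hγ0 hγ1 hρ s).mul_right (c s)]
  simp only [discountedReturn, mul_sum]

end Discounted

variable [DecidableEq S]

theorem initDist_deltaDist (s₀ : S) : initDist (deltaDist s₀) :=
  ⟨fun s => by unfold deltaDist; split_ifs <;> norm_num, by simp [deltaDist]⟩

theorem stepDist_deltaDist (s₀ s : S) :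
    stepDist P θ (deltaDist s₀) s = ∑ a, jointPi θ s₀ a * P s₀ a s := by
  simp [stepDist, deltaDist, ite_mul]

theorem stepDist_eq_sum (μ : S → ℝ) (s : S) :
    stepDist P θ μ s = ∑ s₀, μ s₀ * stepDist P θ (deltaDist s₀) s := by
  simp only [stepDist_deltaDist, mul_sum]
  simp only [stepDist, mul_assoc]

theorem visit_eq_sum (t : ℕ) (μ : S → ℝ) (s : S) :
    visit P θ t μ s = ∑ s₀, μ s₀ * visit P θ t (deltaDist s₀) s := by
  induction t generalizing μ with
  | zero => simp [visit, deltaDist]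
  | succ t ih =>
    rw [visit_succ, ih]
    simp only [visit_succ, ih (stepDist P θ (deltaDist _)), stepDist_eq_sum μ, sum_mul, mul_sum,
      mul_assoc]
    exact sum_comm

section Bellman

variable (hP : stochMat P) (hθ : feasible θ) (hγ0 : 0 ≤ γ) (hγ1 : γ < 1)
include hP hθ hγ0 hγ1

theorem discountedReturn_eq_sum (c μ : S → ℝ) :
    discountedReturn P θ γ c μ = ∑ s₀, μ s₀ * discountedReturn P θ γ c (deltaDist s₀) := by
  simp only [discountedReturn, ← tsum_mul_left]
  rw [← Summable.tsum_finsetSum fun s₀ _ =>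
    (summable_discountedReturn hP hθ hγ0 hγ1 (initDist_deltaDist s₀) c).mul_left (μ s₀)]
  refine tsum_congr fun t => ?_
  simp only [visit_eq_sum t μ, sum_mul, mul_sum]
  rw [sum_comm]
  exact sum_congr rfl fun _ _ => sum_congr rfl fun _ _ => by ring

theorem discountedReturn_deltaDist (c : S → ℝ) (s : S) :
    discountedReturn P θ γ c (deltaDist s) =
      c s + γ * ∑ s', stepDist P θ (deltaDist s) s' * discountedReturn P θ γ c (deltaDist s') := by
  rw [← discountedReturn_eq_sum hP hθ hγ0 hγ1, discountedReturn,
    (summable_discountedReturn hP hθ hγ0 hγ1 (initDist_deltaDist s) c).tsum_eq_zero_add,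
    discountedReturn, ← tsum_mul_left]
  simp only [visit_succ, pow_succ, mul_assoc, mul_left_comm γ]
  simp [visit, deltaDist]

theorem Vval_eq_expRew_add (rw : S → (∀ i, A i) → ℝ) (s : S) :
    Vval P θ γ rw s = expRew rw θ s + γ * ∑ s', stepDist P θ (deltaDist s) s' * Vval P θ γ rw s' :=
  discountedReturn_deltaDist hP hθ hγ0 hγ1 _ s

/-- `γ` times a stochastic matrix is a sup-norm contraction, so Bellman equations have unique
solutions. -/
theorem eq_zero_of_eq_mul_sum_stepDist {E : S → ℝ}
    (hE : ∀ s, E s = γ * ∑ s', stepDist P θ (deltaDist s) s' * E s') (s : S) : E s = 0 := by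
  have : Nonempty S := ⟨s⟩
  obtain ⟨s₀, hs₀⟩ := Finite.exists_max fun s => |E s|
  have hq := initDist_stepDist hP hθ (initDist_deltaDist s₀)
  have hle : |E s₀| ≤ γ * |E s₀| := calc
    |E s₀| = γ * |∑ s', stepDist P θ (deltaDist s₀) s' * E s'| := by
      rw [hE s₀, abs_mul, abs_of_nonneg hγ0]
    _ ≤ γ * ∑ s', stepDist P θ (deltaDist s₀) s' * |E s₀| := by
      refine mul_le_mul_of_nonneg_left ((abs_sum_le_sum_abs _ _).trans ?_) hγ0
      refine sum_le_sum fun s' _ => ?_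
      rw [abs_mul, abs_of_nonneg (hq.1 s')]
      exact mul_le_mul_of_nonneg_left (hs₀ s') (hq.1 s')
    _ = γ * |E s₀| := by rw [← sum_mul, hq.2, one_mul]
  have hmax : |E s₀| ≤ 0 := by nlinarith [abs_nonneg (E s₀)]
  exact abs_nonpos_iff.1 ((hs₀ s).trans hmax)

end Bellman

theorem sum_jointPi_mul_Qval (rw : S → (∀ i, A i) → ℝ) (θ' : ∀ i, S → A i → ℝ) (s : S) :
    ∑ a, jointPi θ' s a * Qval P θ γ rw s a =
      expRew rw θ' s + γ * ∑ s', stepDist P θ' (deltaDist s) s' * Vval P θ γ rw s' := by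
  simp only [Qval, expRew, mul_add, sum_add_distrib, stepDist_deltaDist, sum_mul, mul_sum]
  rw [sum_comm (γ := S)]
  exact congrArg _ <| sum_congr rfl fun _ _ => sum_congr rfl fun _ _ => by ring

variable [∀ i, DecidableEq (A i)]

theorem sum_mul_Qbar (rw : S → (∀ i, A i) → ℝ) (i : Fin n) (θi : S → A i → ℝ) (s : S) :
    ∑ ai, θi s ai * Qbar P θ γ rw i s ai =
      ∑ a, jointPi (Function.update θ i θi) s a * Qval P θ γ rw s a := by
  simp only [Qbar, mul_sum, mul_ite, mul_zero, jointPi_update]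
  rw [sum_comm]
  exact sum_congr rfl fun a _ => by simp [mul_assoc]

theorem sum_mul_Abar {rw : S → (∀ i, A i) → ℝ} {i : Fin n} {θi : S → A i → ℝ}
    (hθi : feasibleAgent i θi) (s : S) :
    ∑ ai, θi s ai * Abar P θ γ rw i s ai =
      ∑ ai, θi s ai * Qbar P θ γ rw i s ai - Vval P θ γ rw s := by
  simp only [Abar, mul_sub, sum_sub_distrib, ← sum_mul, (hθi s).2, one_mul]

section Advantage

variable (hP : stochMat P) (hθ : feasible θ) (hγ0 : 0 ≤ γ) (hγ1 : γ < 1)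
include hP hθ hγ0 hγ1

theorem sum_mul_Qbar_self (rw : S → (∀ i, A i) → ℝ) (i : Fin n) (s : S) :
    ∑ ai, θ i s ai * Qbar P θ γ rw i s ai = Vval P θ γ rw s := by
  rw [sum_mul_Qbar, Function.update_eq_self, sum_jointPi_mul_Qval,
    ← Vval_eq_expRew_add hP hθ hγ0 hγ1]

theorem sum_mul_Abar_self (rw : S → (∀ i, A i) → ℝ) (i : Fin n) (s : S) :
    ∑ ai, θ i s ai * Abar P θ γ rw i s ai = 0 := by
  rw [sum_mul_Abar (hθ i), sum_mul_Qbar_self hP hθ hγ0 hγ1, sub_self]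

/-- The performance difference lemma for a unilateral deviation. -/
theorem Vval_update_sub {rw : S → (∀ i, A i) → ℝ} {i : Fin n} {θi : S → A i → ℝ}
    (hθi : feasibleAgent i θi) (s : S) :
    Vval P (Function.update θ i θi) γ rw s - Vval P θ γ rw s =
      discountedReturn P (Function.update θ i θi) γ
        (fun s => ∑ ai, θi s ai * Abar P θ γ rw i s ai) (deltaDist s) := by
  have hθ' := hθ.update hθi
  refine sub_eq_zero.1 <| eq_zero_of_eq_mul_sum_stepDist hP hθ' hγ0 hγ1
    (E := fun s => Vval P _ γ rw s - Vval P θ γ rw s - discountedReturn P _ γ _ (deltaDist s))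
    (fun s => ?_) s
  rw [Vval_eq_expRew_add hP hθ' hγ0 hγ1, discountedReturn_deltaDist hP hθ' hγ0 hγ1,
    sum_mul_Abar hθi, sum_mul_Qbar, sum_jointPi_mul_Qval]
  simp only [mul_sub, sum_sub_distrib]
  ring

theorem Jval_update_sub {rw : S → (∀ i, A i) → ℝ} {i : Fin n} {θi : S → A i → ℝ}
    (hθi : feasibleAgent i θi) {ρ : S → ℝ} (hρ : initDist ρ) :
    Jval P (Function.update θ i θi) γ rw ρ - Jval P θ γ rw ρ =
      (1 - γ)⁻¹ * ∑ s, dvisit P (Function.update θ i θi) γ ρ s *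
        ∑ ai, θi s ai * Abar P θ γ rw i s ai := by
  have hθ' := hθ.update hθi
  rw [sum_dvisit_mul hP hθ' hγ0 hγ1 hρ, inv_mul_cancel_left₀ (sub_pos.2 hγ1).ne',
    discountedReturn_eq_sum hP hθ' hγ0 hγ1, Jval, Jval, ← sum_sub_distrib]
  simp only [← mul_sub, Vval_update_sub hP hθ hγ0 hγ1 hθi]

theorem sum_mul_gradJ {rw : S → (∀ i, A i) → ℝ} {i : Fin n} {θi : S → A i → ℝ}
    (hθi : feasibleAgent i θi) (ρ : S → ℝ) :
    ∑ s, ∑ ai, (θi s ai - θ i s ai) * gradJ P θ γ rw ρ i s ai =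
      (1 - γ)⁻¹ * ∑ s, dvisit P θ γ ρ s * ∑ ai, θi s ai * Abar P θ γ rw i s ai := by
  rw [mul_sum]
  refine sum_congr rfl fun s _ => ?_
  rw [sum_mul_Abar hθi, ← sum_mul_Qbar_self hP hθ hγ0 hγ1 rw i, ← sum_sub_distrib, mul_sum,
    mul_sum]
  exact sum_congr rfl fun a _ => by simp only [gradJ]; ring

end Advantage

end MAMDP

theorem stmt8_general {n : ℕ} {S : Type} [Fintype S] [DecidableEq S]
    {A : Fin n → Type} [∀ i, Fintype (A i)] [∀ i, DecidableEq (A i)]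
    (P : S → (∀ i, A i) → S → ℝ) (hP : stochMat P)
    (r : Fin n → S → (∀ i, A i) → ℝ)
    (γ : ℝ) (hγ0 : 0 ≤ γ) (hγ1 : γ < 1)
    (ρ : S → ℝ) (hρ : initDist ρ)
    (hd : ∀ θ : ∀ i, S → A i → ℝ, feasible θ → ∀ s, 0 < dvisit P θ γ ρ s)
    (θstar : ∀ i, S → A i → ℝ) (hθstar : feasible θstar) :
    (∀ (i : Fin n) (θi' : S → A i → ℝ), feasibleAgent i θi' →
        Jval P (Function.update θstar i θi') γ (r i) ρ ≤ Jval P θstar γ (r i) ρ) ↔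
    (∀ (i : Fin n) (θi' : S → A i → ℝ), feasibleAgent i θi' →
        ∑ s, ∑ a, (θi' s a - θstar i s a) * gradJ P θstar γ (r i) ρ i s a ≤ 0) := by
  have hscale : ∀ x : ℝ, (1 - γ)⁻¹ * x ≤ 0 ↔ x ≤ 0 := fun x => by
    rw [← smul_eq_mul, smul_nonpos_iff_nonpos_of_pos_left (inv_pos.2 (sub_pos.2 hγ1))]
  have hAbar := sum_mul_Abar_self hP hθstar hγ0 hγ1
  calc _ ↔ ∀ i (θi' : S → A i → ℝ), feasibleAgent i θi' →
        ∑ s, dvisit P (Function.update θstar i θi') γ ρ s *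
          ∑ a, θi' s a * Abar P θstar γ (r i) i s a ≤ 0 := by
        refine forall_congr' fun i => forall₂_congr fun θi' hθi' => ?_
        rw [← sub_nonpos, Jval_update_sub hP hθstar hγ0 hγ1 hθi' hρ, hscale]
    _ ↔ ∀ i s a, Abar P θstar γ (r i) i s a ≤ 0 := forall_congr' fun i =>
        forall_sum_mul_sum_mul_nonpos_iff (hθstar i) (hAbar (r i) i) _
          fun _ hη => hd _ (hθstar.update hη)
    _ ↔ ∀ i (θi' : S → A i → ℝ), feasibleAgent i θi' →
        ∑ s, dvisit P θstar γ ρ s * ∑ a, θi' s a * Abar P θstar γ (r i) i s a ≤ 0 :=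
      forall_congr' fun i => (forall_sum_mul_sum_mul_nonpos_iff (hθstar i) (hAbar (r i) i) _
        fun _ _ => hd θstar hθstar).symm
    _ ↔ _ := by
        refine forall_congr' fun i => forall₂_congr fun θi' hθi' => ?_
        rw [sum_mul_gradJ hP hθstar hγ0 hγ1 hθi', hscale]

/-- Equivalence of Nash equilibria and first-order stationary policies under the
assumption that every state is visited with positive probability. -/
theorem stmt8 {n : ℕ} {S : Type} [Fintype S] [DecidableEq S]
    {A : Fin n → Type} [∀ i, Fintype (A i)] [∀ i, DecidableEq (A i)]
    (P : S → (∀ i, A i) → S → ℝ) (hP : stochMat P)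
    (r : Fin n → S → (∀ i, A i) → ℝ) (hr : ∀ i s a, 0 ≤ r i s a ∧ r i s a ≤ 1)
    (γ : ℝ) (hγ0 : 0 ≤ γ) (hγ1 : γ < 1)
    (ρ : S → ℝ) (hρ : initDist ρ)
    (hd : ∀ θ : ∀ i, S → A i → ℝ, feasible θ → ∀ s, 0 < dvisit P θ γ ρ s)
    (θstar : ∀ i, S → A i → ℝ) (hθstar : feasible θstar) :
    (∀ (i : Fin n) (θi' : S → A i → ℝ), feasibleAgent i θi' →
        Jval P (Function.update θstar i θi') γ (r i) ρ ≤ Jval P θstar γ (r i) ρ) ↔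
    (∀ (i : Fin n) (θi' : S → A i → ℝ), feasibleAgent i θi' →
        ∑ s, ∑ a, (θi' s a - θstar i s a) * gradJ P θstar γ (r i) ρ i s a ≤ 0) :=
  stmt8_general P hP r γ hγ0 hγ1 ρ hρ hd θstar hθstar
end

section
/- For an n-agent tabular MDP, (1/(1−γ)) ∑_s d_θ(s) max_{a_i ∈ A_i} Ā_i^θ(s, a_i) = max_{θ̄_i ∈ X_i} ⟨θ̄_i − θ_i, ∇_{θ_i} J_i(θ)⟩, where Ā_i^θ(s,a_i) = ∑_{a_{-i}} π_{θ_{-i}}(a_{-i}|s) A_i^θ(s,a_i,a_{-i}) is the averaged advantage function and X_i = Δ(A_i)^{|S|}. -/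
open Finset

open MAMDP


namespace MAMDPAux

variable {n : ℕ} {S : Type} [Fintype S] [DecidableEq S]
  {A : Fin n → Type} [∀ i, Fintype (A i)] [∀ i, DecidableEq (A i)]

lemma jointPi_nonneg {θ : ∀ i, S → A i → ℝ} (hθ : feasible θ) (s : S) (a : ∀ i, A i) :
    0 ≤ jointPi θ s a :=
  Finset.prod_nonneg fun j _ => (hθ j s).1 (a j)

lemma sum_jointPi {θ : ∀ i, S → A i → ℝ} (hθ : feasible θ) (s : S) :
    ∑ a : ∀ i, A i, jointPi θ s a = 1 := by
  unfold jointPi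
  rw [← Fintype.piFinset_univ, ← Finset.prod_univ_sum]
  exact Finset.prod_eq_one fun j _ => (hθ j s).2

lemma expRew_nonneg {θ : ∀ i, S → A i → ℝ} (hθ : feasible θ) {rf : S → (∀ i, A i) → ℝ}
    (hrf : ∀ s a, 0 ≤ rf s a) (s : S) : 0 ≤ expRew rf θ s :=
  Finset.sum_nonneg fun a _ => mul_nonneg (jointPi_nonneg hθ s a) (hrf s a)

lemma expRew_le_one {θ : ∀ i, S → A i → ℝ} (hθ : feasible θ) {rf : S → (∀ i, A i) → ℝ}
    (hrf : ∀ s a, rf s a ≤ 1) (s : S) : expRew rf θ s ≤ 1 := by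
  calc expRew rf θ s ≤ ∑ a, jointPi θ s a := Finset.sum_le_sum fun a _ =>
        mul_le_of_le_one_right (jointPi_nonneg hθ s a) (hrf s a)
  _ = 1 := sum_jointPi hθ s

lemma visit_nonneg (P : S → (∀ i, A i) → S → ℝ) (hP : stochMat P)
    {θ : ∀ i, S → A i → ℝ} (hθ : feasible θ) {μ : S → ℝ} (hμ : ∀ s, 0 ≤ μ s)
    (t : ℕ) (s : S) : 0 ≤ visit P θ t μ s := by
  induction t generalizing μ with
  | zero => exact hμ s
  | succ t ih =>
    simp only [visit, Function.iterate_succ_apply]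
    exact ih (fun s' => Finset.sum_nonneg fun s0 _ => Finset.sum_nonneg fun a _ =>
      mul_nonneg (mul_nonneg (hμ s0) (jointPi_nonneg hθ s0 a)) ((hP s0 a).1 s'))

lemma visit_sum (P : S → (∀ i, A i) → S → ℝ) (hP : stochMat P)
    {θ : ∀ i, S → A i → ℝ} (hθ : feasible θ) (μ : S → ℝ) (t : ℕ) :
    ∑ s, visit P θ t μ s = ∑ s, μ s := by
  induction t generalizing μ with
  | zero => rfl
  | succ t ih =>
    simp only [visit, Function.iterate_succ_apply]
    refine (ih _).trans ?_
    unfold stepDist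
    rw [Finset.sum_comm]
    refine Finset.sum_congr rfl fun s _ => ?_
    rw [Finset.sum_comm]
    have h : ∀ a ∈ (Finset.univ : Finset (∀ i, A i)),
        ∑ s', μ s * jointPi θ s a * P s a s' = μ s * jointPi θ s a := by
      intro a _; rw [← Finset.mul_sum, (hP s a).2, mul_one]
    rw [Finset.sum_congr rfl h, ← Finset.mul_sum, sum_jointPi hθ s, mul_one]

lemma stepDist_delta (P : S → (∀ i, A i) → S → ℝ) (θ : ∀ i, S → A i → ℝ) (s0 s1 : S) :
    stepDist P θ (deltaDist s0) s1 = ∑ a, jointPi θ s0 a * P s0 a s1 := by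
  unfold stepDist deltaDist
  rw [Finset.sum_eq_single s0]
  · simp
  · intro b _ hb; simp [hb]
  · simp

lemma visit_linear (P : S → (∀ i, A i) → S → ℝ) (θ : ∀ i, S → A i → ℝ)
    (t : ℕ) (μ : S → ℝ) (s' : S) :
    visit P θ t μ s' = ∑ s0, μ s0 * visit P θ t (deltaDist s0) s' := by
  induction t generalizing μ with
  | zero =>
    show μ s' = ∑ s0, μ s0 * deltaDist s0 s'
    rw [Finset.sum_eq_single s']
    · simp [deltaDist]
    · intro b _ hb; simp [deltaDist, Ne.symm hb]
    · simp
  | succ t ih =>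
    have hstep : ∀ s1, stepDist P θ μ s1
        = ∑ s0, μ s0 * stepDist P θ (deltaDist s0) s1 := by
      intro s1
      simp only [stepDist_delta]
      unfold stepDist
      refine Finset.sum_congr rfl fun s0 _ => ?_
      rw [Finset.mul_sum]
      exact Finset.sum_congr rfl fun a _ => by ring
    have hit : ∀ ν : S → ℝ, visit P θ (t+1) ν = visit P θ t (stepDist P θ ν) := by
      intro ν; simp only [visit, Function.iterate_succ_apply]
    calc visit P θ (t+1) μ s' = visit P θ t (stepDist P θ μ) s' := by rw [hit]
      _ = ∑ s1, stepDist P θ μ s1 * visit P θ t (deltaDist s1) s' := ih _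
      _ = ∑ s1, (∑ s0, μ s0 * stepDist P θ (deltaDist s0) s1) * visit P θ t (deltaDist s1) s' := by
          simp only [hstep]
      _ = ∑ s0, μ s0 * ∑ s1, stepDist P θ (deltaDist s0) s1 * visit P θ t (deltaDist s1) s' := by
          simp only [Finset.sum_mul, Finset.mul_sum]
          rw [Finset.sum_comm]
          exact Finset.sum_congr rfl fun s0 _ => Finset.sum_congr rfl fun s1 _ => by ring
      _ = ∑ s0, μ s0 * visit P θ t (stepDist P θ (deltaDist s0)) s' := by
          simp only [← ih]
      _ = ∑ s0, μ s0 * visit P θ (t+1) (deltaDist s0) s' := by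
          simp only [hit]

lemma deltaDist_nonneg (s0 s : S) : 0 ≤ deltaDist s0 s := by
  unfold deltaDist; split <;> norm_num

lemma deltaDist_sum (s0 : S) : ∑ s, deltaDist s0 s = 1 := by
  simp [deltaDist]

lemma summable_aux (P : S → (∀ i, A i) → S → ℝ) (hP : stochMat P)
    {θ : ∀ i, S → A i → ℝ} (hθ : feasible θ) {γ : ℝ} (hγ0 : 0 ≤ γ) (hγ1 : γ < 1)
    {rf : S → (∀ i, A i) → ℝ} (hrf : ∀ s a, 0 ≤ rf s a ∧ rf s a ≤ 1)
    {μ : S → ℝ} (hμ0 : ∀ s, 0 ≤ μ s) (hμ1 : ∑ s, μ s = 1) :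
    Summable (fun t : ℕ => γ ^ t * ∑ s', visit P θ t μ s' * expRew rf θ s') := by
  refine Summable.of_nonneg_of_le (fun t => ?_) (fun t => ?_)
    (summable_geometric_of_lt_one hγ0 hγ1)
  · exact mul_nonneg (pow_nonneg hγ0 t) (Finset.sum_nonneg fun s' _ =>
      mul_nonneg (visit_nonneg P hP hθ hμ0 t s') (expRew_nonneg hθ (fun s a => (hrf s a).1) s'))
  · have h1 : ∑ s', visit P θ t μ s' * expRew rf θ s' ≤ ∑ s', visit P θ t μ s' :=
      Finset.sum_le_sum fun s' _ => mul_le_of_le_one_right (visit_nonneg P hP hθ hμ0 t s')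
        (expRew_le_one hθ (fun s a => (hrf s a).2) s')
    calc γ ^ t * ∑ s', visit P θ t μ s' * expRew rf θ s'
        ≤ γ ^ t * 1 := mul_le_mul_of_nonneg_left
          (h1.trans_eq (by rw [visit_sum P hP hθ μ t, hμ1])) (pow_nonneg hγ0 t)
      _ = γ ^ t := mul_one _

lemma tsum_visit_expRew (P : S → (∀ i, A i) → S → ℝ) (hP : stochMat P)
    {θ : ∀ i, S → A i → ℝ} (hθ : feasible θ) {γ : ℝ} (hγ0 : 0 ≤ γ) (hγ1 : γ < 1)
    {rf : S → (∀ i, A i) → ℝ} (hrf : ∀ s a, 0 ≤ rf s a ∧ rf s a ≤ 1)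
    (μ : S → ℝ) :
    ∑' t : ℕ, γ ^ t * ∑ s', visit P θ t μ s' * expRew rf θ s'
      = ∑ s0, μ s0 * Vval P θ γ rf s0 := by
  have key : ∀ t : ℕ, γ ^ t * ∑ s', visit P θ t μ s' * expRew rf θ s'
      = ∑ s0, μ s0 * (γ ^ t * ∑ s', visit P θ t (deltaDist s0) s' * expRew rf θ s') := by
    intro t
    calc γ ^ t * ∑ s', visit P θ t μ s' * expRew rf θ s'
        = ∑ s', ∑ s0, μ s0 * (γ ^ t * (visit P θ t (deltaDist s0) s' * expRew rf θ s')) := by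
          rw [Finset.mul_sum]
          refine Finset.sum_congr rfl fun s' _ => ?_
          rw [visit_linear P θ t μ s', Finset.sum_mul, Finset.mul_sum]
          exact Finset.sum_congr rfl fun s0 _ => by ring
      _ = ∑ s0, μ s0 * (γ ^ t * ∑ s', visit P θ t (deltaDist s0) s' * expRew rf θ s') := by
          rw [Finset.sum_comm]
          exact Finset.sum_congr rfl fun s0 _ => by
            simp only [Finset.mul_sum]
  rw [tsum_congr key, Summable.tsum_finsetSum (fun s0 _ => Summable.mul_left _
    (summable_aux P hP hθ hγ0 hγ1 hrf (deltaDist_nonneg s0) (deltaDist_sum s0)))]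
  exact Finset.sum_congr rfl fun s0 _ => tsum_mul_left

lemma bellman (P : S → (∀ i, A i) → S → ℝ) (hP : stochMat P)
    {θ : ∀ i, S → A i → ℝ} (hθ : feasible θ) {γ : ℝ} (hγ0 : 0 ≤ γ) (hγ1 : γ < 1)
    {rf : S → (∀ i, A i) → ℝ} (hrf : ∀ s a, 0 ≤ rf s a ∧ rf s a ≤ 1) (s : S) :
    Vval P θ γ rf s = ∑ a, jointPi θ s a * Qval P θ γ rf s a := by
  have hsum := summable_aux P hP hθ hγ0 hγ1 hrf (deltaDist_nonneg s) (deltaDist_sum s)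
  rw [Vval, Summable.tsum_eq_zero_add hsum]
  have h0 : γ ^ 0 * ∑ s', visit P θ 0 (deltaDist s) s' * expRew rf θ s' = expRew rf θ s := by
    simp [visit, deltaDist, ite_mul]
  have h1 : ∀ t : ℕ, γ ^ (t+1) * ∑ s', visit P θ (t+1) (deltaDist s) s' * expRew rf θ s'
      = γ * (γ ^ t * ∑ s', visit P θ t (stepDist P θ (deltaDist s)) s' * expRew rf θ s') := by
    intro t
    have hit : visit P θ (t+1) (deltaDist s) = visit P θ t (stepDist P θ (deltaDist s)) := by
      simp only [visit, Function.iterate_succ_apply]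
    rw [hit, pow_succ]; ring
  rw [h0, tsum_congr h1, tsum_mul_left,
    tsum_visit_expRew P hP hθ hγ0 hγ1 hrf (stepDist P θ (deltaDist s))]
  simp only [stepDist_delta]
  have hmain : γ * ∑ s0, (∑ a, jointPi θ s a * P s a s0) * Vval P θ γ rf s0
      = ∑ a, jointPi θ s a * (γ * ∑ s0, P s a s0 * Vval P θ γ rf s0) := by
    simp only [Finset.mul_sum, Finset.sum_mul]
    rw [Finset.sum_comm]
    exact Finset.sum_congr rfl fun a _ => Finset.sum_congr rfl fun s0 _ => by ring
  rw [hmain, expRew, ← Finset.sum_add_distrib]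
  exact Finset.sum_congr rfl fun a _ => by rw [Qval]; ring

lemma sum_theta_Qbar (P : S → (∀ i, A i) → S → ℝ)
    {θ : ∀ i, S → A i → ℝ} (γ : ℝ) (rf : S → (∀ i, A i) → ℝ) (i : Fin n) (s : S) :
    ∑ ai, θ i s ai * Qbar P θ γ rf i s ai
      = ∑ a : ∀ j, A j, jointPi θ s a * Qval P θ γ rf s a := by
  unfold Qbar
  simp only [Finset.mul_sum, mul_ite, mul_zero]
  rw [Finset.sum_comm]
  simp only [Finset.sum_ite_eq, Finset.mem_univ, if_true]
  refine Finset.sum_congr rfl fun a _ => ?_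
  rw [jointPi, ← Finset.mul_prod_erase Finset.univ (fun j => θ j s (a j)) (Finset.mem_univ i),
    mul_assoc]

lemma dvisit_nonneg (P : S → (∀ i, A i) → S → ℝ) (hP : stochMat P)
    {θ : ∀ i, S → A i → ℝ} (hθ : feasible θ) {γ : ℝ} (hγ0 : 0 ≤ γ) (hγ1 : γ < 1)
    {ρ : S → ℝ} (hρ : initDist ρ) (s : S) : 0 ≤ dvisit P θ γ ρ s :=
  mul_nonneg (by linarith) (tsum_nonneg fun t => mul_nonneg (pow_nonneg hγ0 t)
    (visit_nonneg P hP hθ hρ.1 t s))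

lemma inner_eq (P : S → (∀ i, A i) → S → ℝ) (hP : stochMat P)
    {θ : ∀ i, S → A i → ℝ} (hθ : feasible θ) {γ : ℝ} (hγ0 : 0 ≤ γ) (hγ1 : γ < 1)
    {rf : S → (∀ i, A i) → ℝ} (hrf : ∀ s a, 0 ≤ rf s a ∧ rf s a ≤ 1)
    (ρ : S → ℝ) (i : Fin n) {θb : S → A i → ℝ} (hθb : feasibleAgent i θb) :
    ∑ s, ∑ a, (θb s a - θ i s a) * gradJ P θ γ rf ρ i s a
      = (1 / (1 - γ)) * ∑ s, dvisit P θ γ ρ s * ∑ a, θb s a * Abar P θ γ rf i s a := by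
  rw [Finset.mul_sum]
  refine Finset.sum_congr rfl fun s _ => ?_
  have hV : ∑ ai, θ i s ai * Qbar P θ γ rf i s ai = Vval P θ γ rf s := by
    rw [sum_theta_Qbar P γ rf i s, ← bellman P hP hθ hγ0 hγ1 hrf s]
  unfold gradJ Abar
  have expand : ∀ (f : A i → ℝ),
      ∑ a, f a * (1 / (1 - γ) * dvisit P θ γ ρ s * Qbar P θ γ rf i s a)
        = 1 / (1 - γ) * dvisit P θ γ ρ s * ∑ a, f a * Qbar P θ γ rf i s a := by
    intro f; rw [Finset.mul_sum]; exact Finset.sum_congr rfl fun a _ => by ring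
  have hrhs : ∑ a, θb s a * (Qbar P θ γ rf i s a - Vval P θ γ rf s)
      = ∑ a, θb s a * Qbar P θ γ rf i s a - Vval P θ γ rf s := by
    simp only [mul_sub, Finset.sum_sub_distrib]
    rw [← Finset.sum_mul, (hθb s).2, one_mul]
  simp only [sub_mul, Finset.sum_sub_distrib, expand, hrhs, hV]
  ring

end MAMDPAux

/-- The scalar first-order-stationarity quantity equals the weighted maximum averaged
advantage: `(1/(1−γ)) ∑_s d_θ(s) max_{a_i} Ā_i^θ(s,a_i) = max_{θ̄_i ∈ X_i} ⟨θ̄_i − θ_i, ∇_{θ_i}J_i(θ)⟩`. -/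
theorem stmt9 {n : ℕ} {S : Type} [Fintype S] [DecidableEq S]
    {A : Fin n → Type} [∀ i, Fintype (A i)] [∀ i, DecidableEq (A i)] [∀ i, Nonempty (A i)]
    (P : S → (∀ i, A i) → S → ℝ) (hP : stochMat P)
    (r : Fin n → S → (∀ i, A i) → ℝ) (hr : ∀ i s a, 0 ≤ r i s a ∧ r i s a ≤ 1)
    (γ : ℝ) (hγ0 : 0 ≤ γ) (hγ1 : γ < 1)
    (ρ : S → ℝ) (hρ : initDist ρ)
    (θ : ∀ i, S → A i → ℝ) (hθ : feasible θ) (i : Fin n) :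
    (1 / (1 - γ)) * ∑ s, dvisit P θ γ ρ s * (⨆ ai : A i, Abar P θ γ (r i) i s ai) =
      sSup {c : ℝ | ∃ θb : S → A i → ℝ, feasibleAgent i θb ∧
        c = ∑ s, ∑ a, (θb s a - θ i s a) * gradJ P θ γ (r i) ρ i s a} := by
  classical
  open MAMDPAux in
  have hbdd : ∀ s : S, BddAbove (Set.range fun ai : A i => Abar P θ γ (r i) i s ai) :=
    fun s => (Set.finite_range _).bddAbove
  obtain ⟨astar, hastar⟩ : ∃ astar : S → A i,
      ∀ s a, Abar P θ γ (r i) i s a ≤ Abar P θ γ (r i) i s (astar s) := by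
    choose astar h using fun s => Finite.exists_max (fun a : A i => Abar P θ γ (r i) i s a)
    exact ⟨astar, h⟩
  have hM : ∀ s, (⨆ ai, Abar P θ γ (r i) i s ai) = Abar P θ γ (r i) i s (astar s) := fun s =>
    le_antisymm (ciSup_le (hastar s)) (le_ciSup (hbdd s) _)
  symm
  apply IsGreatest.csSup_eq
  constructor
  · refine ⟨fun s a => if a = astar s then 1 else 0,
      ⟨fun s => ⟨fun a => by dsimp only; split <;> norm_num, by simp⟩, ?_⟩⟩
    rw [inner_eq P hP hθ hγ0 hγ1 (hr i) ρ i
      (θb := fun s a => if a = astar s then 1 else 0)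
      (fun s => ⟨fun a => by dsimp only; split <;> norm_num, by simp⟩)]
    congr 1
    refine Finset.sum_congr rfl fun s _ => ?_
    congr 1
    rw [hM s]
    simp [ite_mul]
  · rintro c ⟨θb, hθb, rfl⟩
    rw [inner_eq P hP hθ hγ0 hγ1 (hr i) ρ i hθb]
    have hc : (0:ℝ) ≤ 1 / (1 - γ) := div_nonneg zero_le_one (by linarith)
    refine mul_le_mul_of_nonneg_left (Finset.sum_le_sum fun s _ => ?_) hc
    refine mul_le_mul_of_nonneg_left ?_ (dvisit_nonneg P hP hθ hγ0 hγ1 hρ s)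
    calc ∑ a, θb s a * Abar P θ γ (r i) i s a
        ≤ ∑ a, θb s a * (⨆ ai, Abar P θ γ (r i) i s ai) :=
          Finset.sum_le_sum fun a _ => mul_le_mul_of_nonneg_left (le_ciSup (hbdd s) a)
            ((hθb s).1 a)
      _ = ⨆ ai, Abar P θ γ (r i) i s ai := by rw [← Finset.sum_mul, (hθb s).2, one_mul]
end
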